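/- Let ω ∈ (0, π) satisfy ω + tan ω = 0 and define a_k, b_k as the unique solutions of 2πk = 2πβ·sqrt(1 - (1/(2πβ))²) - arccos(1/(2πβ)) and 2πk = 2πβ·sqrt(1 - (sec ω/(2πβ))²) - arccos(sec ω/(2πβ)) respectively. Then the sequences interlace: 0 < a_0 < b_0 < a_1 < b_1 < ⋯ < a_k < b_k < a_{k+1} < ⋯. -/

import Mathlib

open Real Set

/-!
Put x = 2πβ and φ_c(x) = √(x² - c²) - arccos(c / x); then a_k and b_k are defined by
φ_1(2π a_k) = 2πk and φ_s(2π b_k) = 2πk with s = sec ω. Since tan ω = -ω, ω lies in (π/2, π),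
so s < -1 and s² = 1 + ω². For y ≥ |s| this gives φ_s(y) < φ_1(y) ≤ φ_s(y) + ω + π < φ_s(y) + 2π,
and since φ_1 is strictly increasing on [1, ∞), 2π a_k < 2π b_k < 2π a_{k+1}.
-/

theorem Real.sqrt_add_le_sqrt_add_sqrt (u v : ℝ) : √(u + v) ≤ √u + √v := by
  rcases le_total 0 u with hu | hu
  · rcases le_total 0 v with hv | hv
    · rw [sqrt_le_iff]
      refine ⟨by positivity, ?_⟩
      nlinarith [sq_sqrt hu, sq_sqrt hv, mul_nonneg (sqrt_nonneg u) (sqrt_nonneg v)]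
    · rw [sqrt_eq_zero'.2 hv, add_zero]
      exact sqrt_le_sqrt (by linarith)
  · rw [sqrt_eq_zero'.2 hu, zero_add]
    exact sqrt_le_sqrt (by linarith)

noncomputable def phase (c x : ℝ) : ℝ := √(x ^ 2 - c ^ 2) - arccos (c / x)

theorem mul_sqrt_one_sub_div_sq {c x : ℝ} (hx : 0 < x) :
    x * √(1 - (c / x) ^ 2) = √(x ^ 2 - c ^ 2) := by
  rw [show 1 - (c / x) ^ 2 = (x ^ 2 - c ^ 2) / x ^ 2 by field_simp, sqrt_div' _ (by positivity),
    sqrt_sq hx.le, mul_div_cancel₀ _ hx.ne']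

theorem continuousOn_phase {c : ℝ} (hc : c ≠ 0) : ContinuousOn (phase c) (Ici |c|) := by
  have hx : ∀ x ∈ Ici |c|, x ≠ 0 := fun x hx => (lt_of_lt_of_le (abs_pos.2 hc) hx).ne'
  unfold phase
  fun_prop (disch := first | exact hx | exact continuous_arccos.continuousOn)

theorem hasDerivAt_phase {c x : ℝ} (hx : |c| < x) :
    HasDerivAt (phase c) ((x ^ 2 - c) / (x * √(x ^ 2 - c ^ 2))) x := by
  have hx0 : 0 < x := (abs_nonneg c).trans_lt hx
  have hpos : 0 < x ^ 2 - c ^ 2 := by nlinarith [sq_abs c, abs_nonneg c]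
  have hcx : |c / x| < 1 := by rwa [abs_div, abs_of_pos hx0, div_lt_one hx0]
  have hsqrt : HasDerivAt (fun x => √(x ^ 2 - c ^ 2)) (1 / (2 * √(x ^ 2 - c ^ 2)) * (2 * x)) x :=
    (hasDerivAt_sqrt hpos.ne').comp x (by simpa using (hasDerivAt_pow 2 x).sub_const (c ^ 2))
  have hdiv : HasDerivAt (fun x => c / x) (-(c / x ^ 2)) x := by
    simpa [div_eq_mul_inv, mul_comm] using (hasDerivAt_inv hx0.ne').const_mul c
  have harccos := (hasDerivAt_arccos (abs_lt.1 hcx).1.ne' (abs_lt.1 hcx).2.ne).comp x hdiv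
  refine (hsqrt.sub harccos).congr_deriv ?_
  rw [eq_div_of_mul_eq hx0.ne' ((mul_comm _ _).trans (mul_sqrt_one_sub_div_sq hx0))]
  field_simp

theorem strictMonoOn_phase {c : ℝ} (hc : 1 ≤ |c|) : StrictMonoOn (phase c) (Ici |c|) := by
  refine strictMonoOn_of_deriv_pos (convex_Ici _) (continuousOn_phase ?_) fun x hx => ?_
  · exact abs_pos.1 (one_pos.trans_le hc)
  rw [interior_Ici, mem_Ioi] at hx
  have hx0 : 0 < x := (abs_nonneg c).trans_lt hx
  have hpos : 0 < x ^ 2 - c ^ 2 := by nlinarith [sq_abs c, abs_nonneg c]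
  rw [(hasDerivAt_phase hx).deriv]
  exact div_pos (by nlinarith [le_abs_self c]) (by positivity)

theorem phase_lt_phase_one {c y : ℝ} (hc : c < -1) (hy : -c ≤ y) : phase c y < phase 1 y := by
  have hy0 : 0 < y := by linarith
  have hsqrt : √(y ^ 2 - c ^ 2) < √(y ^ 2 - 1) := sqrt_lt_sqrt (by nlinarith) (by nlinarith)
  have harccos : arccos (1 / y) ≤ arccos (c / y) :=
    arccos_le_arccos (div_le_div_of_nonneg_right (by linarith) hy0.le)
  unfold phase
  linarith

theorem phase_one_le_phase_add (c y : ℝ) : phase 1 y ≤ phase c y + √(c ^ 2 - 1) + π := by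
  have hsqrt : √(y ^ 2 - 1) ≤ √(y ^ 2 - c ^ 2) + √(c ^ 2 - 1) := by
    have := sqrt_add_le_sqrt_add_sqrt (y ^ 2 - c ^ 2) (c ^ 2 - 1)
    rwa [sub_add_sub_cancel] at this
  have harccos_one := arccos_nonneg (1 / y)
  have harccos_c := arccos_le_pi (c / y)
  unfold phase
  linarith

theorem pi_div_two_lt_of_add_tan_eq_zero {ω : ℝ} (hω : 0 < ω) (h : ω + tan ω = 0) : π / 2 < ω := by
  by_contra! hle
  rcases hle.lt_or_eq with hlt | rfl
  · linarith [tan_pos_of_pos_of_lt_pi_div_two hω hlt]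
  · rw [tan_pi_div_two] at h
    linarith

theorem inv_cos_sq_eq_one_add_sq {ω : ℝ} (hcos : cos ω ≠ 0) (h : ω + tan ω = 0) :
    (cos ω)⁻¹ ^ 2 = 1 + ω ^ 2 := by
  rw [inv_pow, ← inv_one_add_tan_sq hcos, inv_inv, show tan ω = -ω by linarith, neg_sq]

theorem abs_le_and_phase_eq_of_eq {c β t : ℝ} (hc : c ≠ 0) (hβ : |c| / (2 * π) ≤ β)
    (h : t = 2 * π * β * √(1 - (c / (2 * π * β)) ^ 2) - arccos (c / (2 * π * β))) :
    |c| ≤ 2 * π * β ∧ phase c (2 * π * β) = t := by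
  have hle : |c| ≤ 2 * π * β := by rwa [div_le_iff₀ (by positivity), mul_comm] at hβ
  refine ⟨hle, ?_⟩
  rw [h, phase, mul_sqrt_one_sub_div_sq ((abs_pos.2 hc).trans_le hle)]

theorem lt_of_phase_one_eq_phase {c x y t : ℝ} (hc : c < -1) (hx : 1 ≤ x) (hy : -c ≤ y)
    (hxt : phase 1 x = t) (hyt : phase c y = t) : x < y := by
  have hmono : StrictMonoOn (phase 1) (Ici 1) := by simpa using strictMonoOn_phase abs_one.ge
  refine (hmono.lt_iff_lt hx (show 1 ≤ y by linarith)).1 ?_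
  rw [hxt, ← hyt]
  exact phase_lt_phase_one hc hy

theorem lt_of_phase_one_eq_phase_add_two_pi {c x y t : ℝ} (hc : c < -1) (hcπ : √(c ^ 2 - 1) < π)
    (hx : 1 ≤ x) (hy : -c ≤ y) (hxt : phase 1 x = t + 2 * π) (hyt : phase c y = t) : y < x := by
  have hmono : StrictMonoOn (phase 1) (Ici 1) := by simpa using strictMonoOn_phase abs_one.ge
  refine (hmono.lt_iff_lt (show 1 ≤ y by linarith) hx).1 ?_
  linarith [phase_one_le_phase_add c y]

theorem stmt_6 (ω : ℝ) (hω : ω ∈ Set.Ioo 0 π) (hωeq : ω + Real.tan ω = 0)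
    (a b : ℕ → ℝ)
    (ha : ∀ k, 1 / (2 * π) ≤ a k ∧
      2 * π * k = 2 * π * a k * Real.sqrt (1 - (1 / (2 * π * a k)) ^ 2)
        - Real.arccos (1 / (2 * π * a k)))
    (hb : ∀ k, |(Real.cos ω)⁻¹| / (2 * π) ≤ b k ∧
      2 * π * k = 2 * π * b k * Real.sqrt (1 - ((Real.cos ω)⁻¹ / (2 * π * b k)) ^ 2)
        - Real.arccos ((Real.cos ω)⁻¹ / (2 * π * b k))) :
    0 < a 0 ∧ ∀ k, a k < b k ∧ b k < a (k + 1) := by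
  obtain ⟨hω0, hωπ⟩ := hω
  have hcos : cos ω < 0 :=
    cos_neg_of_pi_div_two_lt_of_lt (pi_div_two_lt_of_add_tan_eq_zero hω0 hωeq) (by linarith)
  set s := (cos ω)⁻¹
  have hs_sq : s ^ 2 = 1 + ω ^ 2 := inv_cos_sq_eq_one_add_sq hcos.ne hωeq
  have hs : s < -1 := by nlinarith [inv_lt_zero.2 hcos]
  have hx k : 1 ≤ 2 * π * a k ∧ phase 1 (2 * π * a k) = 2 * π * k := by
    simpa using abs_le_and_phase_eq_of_eq one_ne_zero (by simpa using (ha k).1) (ha k).2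
  have hy k : -s ≤ 2 * π * b k ∧ phase s (2 * π * b k) = 2 * π * k := by
    simpa [abs_of_neg (hs.trans neg_one_lt_zero)] using
      abs_le_and_phase_eq_of_eq (by linarith) (hb k).1 (hb k).2
  have hsω : √(s ^ 2 - 1) < π := by rwa [hs_sq, add_sub_cancel_left, sqrt_sq hω0.le]
  have hπ : 0 < 2 * π := by positivity
  refine ⟨pos_of_mul_pos_right (one_pos.trans_le (hx 0).1) hπ.le, fun k => ⟨?_, ?_⟩⟩
  · exact lt_of_mul_lt_mul_left
      (lt_of_phase_one_eq_phase hs (hx k).1 (hy k).1 (hx k).2 (hy k).2) hπ.le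
  · refine lt_of_mul_lt_mul_left (lt_of_phase_one_eq_phase_add_two_pi hs hsω (hx (k + 1)).1
      (hy k).1 ?_ (hy k).2) hπ.le
    rw [(hx (k + 1)).2]
    push_cast
    ring
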